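/- arXiv:0805.3214 — 3 statements merged into one kernel-verified Lean document; each statement's English description precedes it below -/
import Mathlib

section
/- Let F be an algebraically closed field of characteristic zero, K = F(t), and let S be an element of the top field E of a root tower for some polynomial over K. Then for all but finitely many t_0 ∈ F, the evaluation S(t_0) is well defined; precisely, there is a finite set Δ ⊆ F such that S can be evaluated at every t_0 ∈ F \ Δ (interpreting each radical generator α_i with α_i^{ℓ_i} = a_i via evaluation of a_i at t_0 and choice of an ℓ_i-th root in F). -/
/-!
Elements of a root tower are algebraic over `K = F(t)`, so some multiple `d • S` with
`0 ≠ d ∈ F[t]` is integral over `F[t]`. When `d(t₀) ≠ 0`, evaluation at `t₀` extends to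
`F[t][1/d]`, and `C = F[t][1/d][S]` is integral and of finite type over it. A maximal ideal of
`C` lying over the kernel of the evaluation has residue field `F` by the Nullstellensatz, and
the quotient map is the required specialization.
-/

/-- A root tower over `K` inside an extension `E`. -/
structure RootTower (K E : Type*) [Field K] [Field E] [Algebra K E] where
  r : ℕ
  step : Fin (r + 1) → IntermediateField K E
  first : step 0 = ⊥
  last : step (Fin.last r) = ⊤
  radical : ∀ i : Fin r, ∃ (ℓ : ℕ) (a : E), 0 < ℓ ∧ a ∈ step i.castSucc ∧ a ≠ 0 ∧
    step i.succ = step i.castSucc ⊔ IntermediateField.adjoin K {x : E | x ^ ℓ = a}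

theorem RootTower.isIntegral {K E : Type*} [Field K] [Field E] [Algebra K E]
    (T : RootTower K E) (S : E) : IsIntegral K S := by
  have step_le : ∀ i, T.step i ≤ algebraicClosure K E := by
    intro i
    induction i using Fin.induction with
    | zero => simp [T.first]
    | succ i ih =>
      obtain ⟨ℓ, a, hℓ, ha, -, h⟩ := T.radical i
      rw [h, sup_le_iff, IntermediateField.adjoin_le_iff]
      exact ⟨ih, fun x hx => IsIntegral.of_pow hℓ (hx ▸ ih ha)⟩
  exact step_le (Fin.last T.r) (T.last ▸ trivial)

theorem AlgHom.exists_comp_eq_of_isIntegral {F B C : Type*} [Field F] [IsAlgClosed F]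
    [CommRing B] [Algebra F B] [CommRing C] [Algebra F C] [Algebra B C] [IsScalarTower F B C]
    [Algebra.FiniteType F C] [Algebra.IsIntegral B C] [FaithfulSMul B C] (ψ : B →ₐ[F] F) :
    ∃ φ : C →ₐ[F] F, φ.comp (IsScalarTower.toAlgHom F B C) = ψ := by
  have : (RingHom.ker ψ).IsMaximal :=
    RingHom.ker_isMaximal_of_surjective ψ fun x => ⟨algebraMap F B x, ψ.commutes x⟩
  obtain ⟨Q, _, _⟩ :=
    Ideal.exists_maximal_ideal_liesOver_of_isIntegral (S := C) (RingHom.ker ψ)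
  let : Field (C ⧸ Q) := Ideal.Quotient.field Q
  -- Zariski's lemma, so that `IsAlgClosed.lift` applies to `C ⧸ Q`.
  have : Module.Finite F (C ⧸ Q) := finite_of_finite_type_of_isJacobsonRing F _
  refine ⟨IsAlgClosed.lift.comp (Ideal.Quotient.mkₐ F Q), AlgHom.ext fun b => ?_⟩
  have hb : algebraMap B C (b - algebraMap F B (ψ b)) ∈ Q := by
    rw [← Ideal.mem_of_liesOver Q (RingHom.ker ψ)]
    simp
  rw [map_sub, ← IsScalarTower.algebraMap_apply, ← Ideal.Quotient.mk_eq_mk_iff_sub_mem] at hb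
  simp [hb]

theorem exists_algHom_extend_of_isIntegral_smul {F A B E : Type*} [Field F] [IsAlgClosed F]
    [CommRing A] [Algebra F A] [Algebra.FiniteType F A] [CommRing B] [Algebra F B] [Algebra A B]
    [IsScalarTower F A B] {d : A} [IsLocalization.Away d B] [CommRing E] [Algebra F E]
    [Algebra A E] [Algebra B E] [IsScalarTower A B E] [IsScalarTower F B E]
    (hinj : Function.Injective (algebraMap B E)) {S : E} (hS : IsIntegral A (d • S))
    (ψ : A →ₐ[F] F) (hψ : IsUnit (ψ d)) :
    ∃ (R : Subalgebra F E) (φ : R →ₐ[F] F) (hA : ∀ a, algebraMap A E a ∈ R),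
      S ∈ R ∧ ∀ a, φ ⟨_, hA a⟩ = ψ a := by
  have hSB : IsIntegral B S := by
    have : S = algebraMap B E (IsLocalization.Away.invSelf d) * d • S := by
      rw [Algebra.smul_def, IsScalarTower.algebraMap_apply A B E, ← mul_assoc, ← map_mul,
        mul_comm (IsLocalization.Away.invSelf d), IsLocalization.Away.mul_invSelf, map_one,
        one_mul]
    rw [this]
    exact isIntegral_algebraMap.mul hS.tower_top
  let C := Algebra.adjoin B {S}
  have : Algebra.IsIntegral B C := Algebra.IsIntegral.adjoin (by simpa using hSB)
  have : FaithfulSMul B C := (faithfulSMul_iff_algebraMap_injective B C).mpr fun x y h =>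
    hinj (congrArg Subtype.val h)
  have : Algebra.FiniteType F B :=
    .trans ‹_› (IsLocalization.finiteType_of_monoid_fg (Submonoid.powers d) B)
  have : Algebra.FiniteType F C :=
    .trans ‹_› (.adjoin_of_finite (Set.finite_singleton S))
  obtain ⟨φ, hφ⟩ := AlgHom.exists_comp_eq_of_isIntegral (C := C)
    (IsLocalization.Away.liftAlgHom d (S := B) hψ)
  let φ' : C.restrictScalars F →ₐ[F] F :=
    { toRingHom := (φ : C →+* F), commutes' := φ.commutes }
  refine ⟨C.restrictScalars F, φ', fun a => ?_, ?_, fun a => ?_⟩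
  · rw [IsScalarTower.algebraMap_apply A B E]
    exact C.algebraMap_mem _
  · exact (Subalgebra.mem_restrictScalars F).mpr (Algebra.subset_adjoin rfl)
  · simp only [IsScalarTower.algebraMap_apply A B E]
    exact (congrArg (· (algebraMap A B a)) hφ).trans (IsLocalization.Away.lift_eq d hψ a)

theorem exists_algHom_extend_of_isAlgebraic {F A E : Type*} [Field F] [IsAlgClosed F]
    [CommRing A] [Algebra F A] [Algebra.FiniteType F A] [Field E] [Algebra F E] [Algebra A E]
    [IsScalarTower F A E] (hinj : Function.Injective (algebraMap A E)) {S : E}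
    (hS : IsAlgebraic A S) :
    ∃ d : A, d ≠ 0 ∧ ∀ ψ : A →ₐ[F] F, ψ d ≠ 0 →
      ∃ (R : Subalgebra F E) (φ : R →ₐ[F] F) (hA : ∀ a, algebraMap A E a ∈ R),
        S ∈ R ∧ ∀ a, φ ⟨_, hA a⟩ = ψ a := by
  obtain ⟨d, hd, hdS⟩ := hS.exists_integral_multiple
  refine ⟨d, hd, fun ψ hψ => ?_⟩
  have : IsDomain A := hinj.isDomain
  have hdE : IsUnit (algebraMap A E d) := ((map_ne_zero_iff _ hinj).mpr hd).isUnit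
  let B := Localization.Away d
  let : Algebra B E := (IsLocalization.Away.lift d hdE).toAlgebra
  have : IsScalarTower A B E :=
    .of_algebraMap_eq fun a => (IsLocalization.Away.lift_eq d hdE a).symm
  have : IsScalarTower F B E := .of_algebraMap_eq fun x => by
    rw [IsScalarTower.algebraMap_apply F A B, IsScalarTower.algebraMap_apply F A E,
      ← IsScalarTower.algebraMap_apply A B E]
  have hBE : Function.Injective (algebraMap B E) := by
    refine (IsLocalization.injective_iff_map_algebraMap_eq (Submonoid.powers d) _).mpr
      fun x y => ?_
    rw [← IsScalarTower.algebraMap_apply, ← IsScalarTower.algebraMap_apply, hinj.eq_iff,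
      (IsLocalization.injective B (powers_le_nonZeroDivisors_of_noZeroDivisors hd)).eq_iff]
  exact exists_algHom_extend_of_isIntegral_smul hBE hdS ψ (isUnit_iff_ne_zero.mpr hψ)

open Polynomial in
theorem root_tower_element_evaluable_general
    {F : Type*} [Field F] [IsAlgClosed F]
    {E : Type*} [Field E] [Algebra F E] [Algebra (RatFunc F) E]
    [IsScalarTower F (RatFunc F) E]
    (T : RootTower (RatFunc F) E) (S : E) :
    ∃ Δ : Finset F, ∀ t₀ : F, t₀ ∉ Δ →
      ∃ (R : Subalgebra F E) (φ : R →ₐ[F] F)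
        (hX : algebraMap (RatFunc F) E RatFunc.X ∈ R) (hS : S ∈ R),
        φ ⟨algebraMap (RatFunc F) E RatFunc.X, hX⟩ = t₀ := by
  let : Algebra F[X] E :=
    ((algebraMap (RatFunc F) E).comp (algebraMap F[X] (RatFunc F))).toAlgebra
  have : IsScalarTower F[X] (RatFunc F) E := .of_algebraMap_eq fun _ => rfl
  have : IsScalarTower F F[X] E := .of_algebraMap_eq fun x => by
    rw [IsScalarTower.algebraMap_apply F (RatFunc F) E,
      IsScalarTower.algebraMap_apply F F[X] (RatFunc F)]
    rfl
  have hinj : Function.Injective (algebraMap F[X] E) :=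
    (algebraMap (RatFunc F) E).injective.comp (IsFractionRing.injective F[X] (RatFunc F))
  have hSalg : IsAlgebraic F[X] S :=
    (IsFractionRing.isAlgebraic_iff F[X] (RatFunc F) E).mpr (T.isIntegral S).isAlgebraic
  obtain ⟨d, hd, hspec⟩ := exists_algHom_extend_of_isAlgebraic (F := F) hinj hSalg
  classical
  refine ⟨d.roots.toFinset, fun t₀ ht₀ => ?_⟩
  have hdt₀ : aeval t₀ d ≠ 0 := by simpa [hd] using ht₀
  obtain ⟨R, φ, hA, hSR, hφ⟩ := hspec (aeval (R := F) t₀) hdt₀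
  have hXE : algebraMap (RatFunc F) E RatFunc.X = algebraMap F[X] E X := by
    rw [IsScalarTower.algebraMap_apply F[X] (RatFunc F) E, RatFunc.algebraMap_X]
  refine ⟨R, φ, hXE ▸ hA X, hSR, ?_⟩
  simpa [hXE] using hφ X

/-- Let `F` be algebraically closed of characteristic zero, `K = F(t)`, and let `S` be an
element of the top field `E` of a root tower over `K`. Then for all but finitely many
`t₀ ∈ F`, `S(t₀)` is well defined: there is a finite set `Δ ⊆ F` such that for every
`t₀ ∉ Δ` there is a specialization, i.e. an `F`-algebra homomorphism `φ` from an
`F`-subalgebra `R` of `E` to `F` whose domain contains `t` and `S`, with `φ(t) = t₀`. -/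
theorem root_tower_element_evaluable
    {F : Type*} [Field F] [IsAlgClosed F] [CharZero F]
    {E : Type*} [Field E] [Algebra F E] [Algebra (RatFunc F) E]
    [IsScalarTower F (RatFunc F) E]
    (T : RootTower (RatFunc F) E) (S : E) :
    ∃ Δ : Finset F, ∀ t₀ : F, t₀ ∉ Δ →
      ∃ (R : Subalgebra F E) (φ : R →ₐ[F] F)
        (hX : algebraMap (RatFunc F) E RatFunc.X ∈ R) (hS : S ∈ R),
        φ ⟨algebraMap (RatFunc F) E RatFunc.X, hX⟩ = t₀ :=
  root_tower_element_evaluable_general T S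
end

section
/- Being parametrizable by radicals is a birational invariant: if two irreducible affine curves C and C* over an algebraically closed field F of characteristic zero are birationally equivalent, then C is parametrizable by radicals if and only if C* is parametrizable by radicals. -/
/-- The affine plane curve `f = 0` is parametrizable by radicals: there is a finite,
nonempty family of square parametrizations `P i ∈ E² \ F²`, with `E` the top of a root
tower over `F(t)`, such that (1) each `P i` satisfies the equation of the curve, and
(2) all but finitely many points of the curve are obtained from some `P i` by a
specialization homomorphism fixing `F` (evaluation at some `t₀ ∈ F`). -/
def RadicalParametrization {F : Type} [Field F] (f : MvPolynomial (Fin 2) F) : Prop :=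
  ∃ (E : Type) (_ : Field E) (_ : Algebra (RatFunc F) E) (_ : RootTower (RatFunc F) E)
    (n : ℕ) (P : Fin n → Fin 2 → E), 0 < n ∧
    (∀ i, ¬ ∀ j, ∃ c : F, P i j = algebraMap (RatFunc F) E (algebraMap F (RatFunc F) c)) ∧
    (∀ i, MvPolynomial.eval₂
      ((algebraMap (RatFunc F) E).comp (algebraMap F (RatFunc F))) (P i) f = 0) ∧
    ∃ Δ : Finset (F × F), ∀ a : Fin 2 → F,
      MvPolynomial.eval a f = 0 → (a 0, a 1) ∉ Δ →
        ∃ (i : Fin n) (R : Subring E) (φ : R →+* F),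
          (∀ c : F, ∃ h : algebraMap (RatFunc F) E (algebraMap F (RatFunc F) c) ∈ R,
            φ ⟨_, h⟩ = c) ∧
          (∀ j, ∃ h : P i j ∈ R, φ ⟨P i j, h⟩ = a j)

/-!
A nonconstant point `P` of the curve `f = 0` with coordinates in a field `E` is a generic point:
the kernel of evaluation at `P` is a prime ideal containing `(f)`, and since `F[x, y]` has Krull
dimension `2`, a strictly larger prime would be maximal, i.e. (Nullstellensatz) the ideal of an
`F`-point, forcing `P` to be constant. So the function field of `f` embeds into `E`; composing
with the birational map embeds the function field of `g`, and the images of the coordinates form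
a generic point `Q` of `g` in the same root tower. A generic point specializes to every point of
the curve, so `Q` alone is a radical parametrization of `g` without exceptional points.
-/

open MvPolynomial

theorem Ideal.isMaximal_of_ne_bot_of_lt {R : Type*} [CommRing R] [IsDomain R]
    (hR : ringKrullDim R ≤ 2) {p q : Ideal R} [p.IsPrime] [q.IsPrime] (hp : p ≠ ⊥)
    (hpq : p < q) : q.IsMaximal := by
  obtain ⟨m, hm, hqm⟩ := Ideal.exists_le_maximal q Ideal.IsPrime.ne_top'
  obtain rfl | hqm := hqm.eq_or_lt
  · exact hm
  have hp1 : 1 ≤ p.height :=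
    Order.one_le_iff_ne_zero.mpr (Ideal.height_eq_zero_iff_eq_bot.not.mpr hp)
  have hm3 : (3 : ℕ∞) ≤ m.height := calc
    (3 : ℕ∞) = 1 + 1 + 1 := by norm_num
    _ ≤ p.height + 1 + 1 := by gcongr
    _ ≤ q.height + 1 := by grw [Ideal.height_add_one_le_of_lt_of_isPrime hpq]
    _ ≤ m.height := Ideal.height_add_one_le_of_lt_of_isPrime hqm
  exact absurd ((WithBot.coe_le_coe.mpr hm3).trans (m.height_le_ringKrullDim_of_isPrime.trans hR))
    (by decide)

namespace MvPolynomial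

variable {σ F E : Type*} [Field F]

theorem ringKrullDim_fin_two : ringKrullDim (MvPolynomial (Fin 2) F) = 2 := by
  simp [ringKrullDim_eq_zero_of_field]

theorem irreducible_X_sub_C (i : σ) (a : F) : Irreducible (X i - C a : MvPolynomial σ F) := by
  classical
  have hcoeff : coeff (Finsupp.single i 1) (X i - C a) = 1 := by
    simp [coeff_X, coeff_C, (Finsupp.single_ne_zero.mpr one_ne_zero).symm]
  refine irreducible_of_totalDegree_eq_one ?_ fun x hx => isUnit_of_dvd_one (hcoeff ▸ hx _)
  refine le_antisymm ((totalDegree_sub_C_le _ _).trans (totalDegree_X i).le) ?_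
  have := le_totalDegree (mem_support_iff.mpr (hcoeff ▸ one_ne_zero))
  rwa [Finsupp.sum_single_index rfl] at this

theorem not_associated_X_sub_C {i j : σ} (hij : i ≠ j) (a b : F) :
    ¬ Associated (X i - C a : MvPolynomial σ F) (X j - C b) := by
  classical
  rintro ⟨u, hu⟩
  have := congrArg (eval (Function.update (fun _ => b + 1) i a)) hu
  simp [Function.update_of_ne hij.symm] at this

section

variable [CommRing E] [Algebra F E]

theorem ker_aeval_eq_span_singleton [IsAlgClosed F] [IsDomain E] {f : MvPolynomial (Fin 2) F}
    (hf : f ≠ 0) [(Ideal.span {f}).IsPrime] {P : Fin 2 → E} (hP : aeval P f = 0)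
    (hnc : ¬ ∀ j, ∃ a : F, P j = algebraMap F E a) :
    RingHom.ker (aeval P) = Ideal.span {f} := by
  have hle : Ideal.span {f} ≤ RingHom.ker (aeval P) :=
    Ideal.span_singleton_le_iff_mem _ |>.mpr hP
  have : (RingHom.ker (aeval (R := F) P)).IsPrime := RingHom.ker_isPrime _
  refine (hle.lt_or_eq.resolve_left fun hlt => hnc fun j => ?_).symm
  have hmax := Ideal.isMaximal_of_ne_bot_of_lt ringKrullDim_fin_two.le
    (Ideal.span_singleton_eq_bot.not.mpr hf) hlt
  obtain ⟨a, ha⟩ := isMaximal_iff_eq_vanishingIdeal_singleton.mp hmax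
  have hmem : X j - C (a j) ∈ RingHom.ker (aeval P) := by
    rw [ha, mem_vanishingIdeal_singleton_iff]
    simp
  exact ⟨a j, by simpa [sub_eq_zero] using hmem⟩

theorem not_forall_exists_eq_algebraMap_of_ker_aeval {g : MvPolynomial (Fin 2) F}
    (hg : Irreducible g) {Q : Fin 2 → E} (hQ : RingHom.ker (aeval Q) = Ideal.span {g}) :
    ¬ ∀ j, ∃ a : F, Q j = algebraMap F E a := by
  intro hconst
  choose a ha using hconst
  have hdvd (j : Fin 2) : g ∣ X j - C (a j) := by
    rw [← Ideal.mem_span_singleton, ← hQ, RingHom.mem_ker]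
    simp [ha]
  exact not_associated_X_sub_C (by decide : (0 : Fin 2) ≠ 1) (a 0) (a 1)
    ((hg.associated_of_dvd (irreducible_X_sub_C _ _) (hdvd 0)).symm.trans
      (hg.associated_of_dvd (irreducible_X_sub_C _ _) (hdvd 1)))

theorem exists_specialization {Q : σ → E} {a : σ → F}
    (h : RingHom.ker (aeval (R := F) Q) ≤ RingHom.ker (eval a)) :
    ∃ (R : Subring E) (ψ : R →+* F), (∀ c : F, ∃ h : algebraMap F E c ∈ R, ψ ⟨_, h⟩ = c) ∧
      ∀ j, ∃ h : Q j ∈ R, ψ ⟨Q j, h⟩ = a j := by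
  set q : MvPolynomial σ F →+* E := (aeval Q).toRingHom
  let ψ := q.rangeRestrict.liftOfSurjective q.rangeRestrict_surjective
    ⟨eval a, by rwa [RingHom.ker_rangeRestrict]⟩
  have hψ (x : MvPolynomial σ F) : ψ (q.rangeRestrict x) = eval a x :=
    RingHom.liftOfSurjective_comp_apply _ _ _ x
  refine ⟨q.range, ψ, fun c => ⟨⟨C c, aeval_C Q c⟩, ?_⟩, fun j => ⟨⟨X j, aeval_X Q j⟩, ?_⟩⟩
  · calc ψ ⟨_, _⟩ = ψ (q.rangeRestrict (C c)) := congrArg ψ (Subtype.ext (aeval_C Q c).symm)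
      _ = c := (hψ _).trans (eval_C c)
  · calc ψ ⟨_, _⟩ = ψ (q.rangeRestrict (X j)) := congrArg ψ (Subtype.ext (aeval_X Q j).symm)
      _ = a j := (hψ _).trans (eval_X _)

end

section

variable [Field E] [Algebra F E]

theorem nonempty_algHom_fractionRing_of_ker_aeval {I : Ideal (MvPolynomial σ F)} [I.IsPrime]
    {P : σ → E} (hP : RingHom.ker (aeval (R := F) P) = I) :
    Nonempty (FractionRing (MvPolynomial σ F ⧸ I) →ₐ[F] E) := by
  subst hP
  exact ⟨IsFractionRing.liftAlgHom (Ideal.kerLiftAlg_injective (aeval (R := F) P))⟩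

theorem ker_aeval_algHom_fractionRing {I : Ideal (MvPolynomial σ F)} [I.IsPrime]
    (ι : FractionRing (MvPolynomial σ F ⧸ I) →ₐ[F] E) :
    RingHom.ker (aeval fun j => ι (algebraMap _ _ (Ideal.Quotient.mk I (X j)))) = I := by
  let κ : (MvPolynomial σ F ⧸ I) →ₐ[F] E := ι.comp (IsScalarTower.toAlgHom F _ _)
  have hfactor : aeval (fun j => ι (algebraMap _ _ (Ideal.Quotient.mk I (X j)))) =
      κ.comp (Ideal.Quotient.mkₐ F I) :=
    algHom_ext fun _ => by simp [κ]
  have hκ : Function.Injective κ := ι.toRingHom.injective.comp (IsFractionRing.injective _ _)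
  ext x
  rw [hfactor, RingHom.mem_ker, AlgHom.comp_apply, map_eq_zero_iff _ hκ,
    Ideal.Quotient.mkₐ_eq_mk, Ideal.Quotient.eq_zero_iff_mem]

end

end MvPolynomial

theorem radicalParametrization_of_ker_aeval {F E : Type} [Field F] [Field E]
    [Algebra (RatFunc F) E] [Algebra F E] [IsScalarTower F (RatFunc F) E]
    (T : RootTower (RatFunc F) E) {g : MvPolynomial (Fin 2) F} (hg : Irreducible g)
    {Q : Fin 2 → E} (hQ : RingHom.ker (aeval (R := F) Q) = Ideal.span {g}) :
    RadicalParametrization g := by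
  refine ⟨E, _, _, T, 1, fun _ => Q, one_pos, fun _ => ?_, fun _ => ?_, ∅, fun a ha _ => ⟨0, ?_⟩⟩
    <;> simp only [← IsScalarTower.algebraMap_apply, ← IsScalarTower.algebraMap_eq]
  · exact not_forall_exists_eq_algebraMap_of_ker_aeval hg hQ
  · exact (hQ ▸ Ideal.mem_span_singleton_self g : g ∈ RingHom.ker (aeval Q))
  · refine exists_specialization ?_
    rwa [hQ, Ideal.span_singleton_le_iff_mem]

theorem RadicalParametrization.of_algEquiv {F : Type} [Field F] [IsAlgClosed F]
    {f g : MvPolynomial (Fin 2) F} (hf : f ≠ 0) (hg : Irreducible g)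
    [(Ideal.span {f}).IsPrime] [(Ideal.span {g}).IsPrime]
    (φ : FractionRing (MvPolynomial (Fin 2) F ⧸ Ideal.span {f}) ≃ₐ[F]
      FractionRing (MvPolynomial (Fin 2) F ⧸ Ideal.span {g}))
    (h : RadicalParametrization f) : RadicalParametrization g := by
  obtain ⟨E, _, _, T, n, P, hn, hnc, hP, -⟩ := h
  let : Algebra F E := ((algebraMap (RatFunc F) E).comp (algebraMap F (RatFunc F))).toAlgebra
  have : IsScalarTower F (RatFunc F) E := IsScalarTower.of_algebraMap_eq' rfl
  obtain ⟨ι⟩ := nonempty_algHom_fractionRing_of_ker_aeval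
    (ker_aeval_eq_span_singleton hf (hP ⟨0, hn⟩) (hnc ⟨0, hn⟩))
  exact radicalParametrization_of_ker_aeval T hg
    (ker_aeval_algHom_fractionRing (ι.comp φ.symm.toAlgHom))

theorem radicalParametrization_birational_invariant_general
    {F : Type} [Field F] [IsAlgClosed F]
    (f g : MvPolynomial (Fin 2) F) (hf : Irreducible f) (hg : Irreducible g)
    [hfp : (Ideal.span {f}).IsPrime] [hgp : (Ideal.span {g}).IsPrime]
    (φ : FractionRing (MvPolynomial (Fin 2) F ⧸ Ideal.span {f}) ≃ₐ[F]
         FractionRing (MvPolynomial (Fin 2) F ⧸ Ideal.span {g})) :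
    RadicalParametrization f ↔ RadicalParametrization g :=
  ⟨.of_algEquiv hf.ne_zero hg φ, .of_algEquiv hg.ne_zero hf φ.symm⟩

/-- Radical parametrizability is a birational invariant: if `C : f = 0` and `C* : g = 0`
are irreducible affine plane curves over an algebraically closed field `F` of
characteristic zero which are birationally equivalent (i.e. their function fields are
isomorphic as `F`-algebras), then `C` is parametrizable by radicals if and only if `C*`
is. -/
theorem radicalParametrization_birational_invariant
    {F : Type} [Field F] [IsAlgClosed F] [CharZero F]
    (f g : MvPolynomial (Fin 2) F) (hf : Irreducible f) (hg : Irreducible g)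
    [hfp : (Ideal.span {f}).IsPrime] [hgp : (Ideal.span {g}).IsPrime]
    (φ : FractionRing (MvPolynomial (Fin 2) F ⧸ Ideal.span {f}) ≃ₐ[F]
         FractionRing (MvPolynomial (Fin 2) F ⧸ Ideal.span {g})) :
    RadicalParametrization f ↔ RadicalParametrization g :=
  radicalParametrization_birational_invariant_general f g hf hg (hfp := hfp) (hgp := hgp) φ
end

section
/- Offsets preserve radical parametrizability: let C be an irreducible plane curve over an algebraically closed field F of characteristic zero that is parametrizable by radicals, and let d ∈ F \ {0}. If (R₁, R₂) is a square parametrization lying in the top field E of a root tower over F(t), then the offset components O^± = (R₁ ∓ d·R₂'/√(R₁'² + R₂'²), R₂ ± d·R₁'/√(R₁'² + R₂'²)) are square parametrizations, lying in the top field of the root tower extended by one square root (of a = R₁'² + R₂'²), provided a ≠ 0. -/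
open Polynomial IntermediateField

theorem RingHom.mem_range_of_pow_eq_one {F L : Type*} [Field F] [IsAlgClosed F] [CommRing L]
    [IsDomain L] (φ : F →+* L) {n : ℕ} (hn : 0 < n) {u : L} (hu : u ^ n = 1) : u ∈ φ.range :=
  (IsAlgClosed.splits (X ^ n - C 1 : F[X])).mem_range_of_isRoot (X_pow_sub_C_ne_zero hn 1)
    (by simp [hu])

section

variable {K E E' : Type*} [Field K] [Field E] [Field E'] [Algebra K E] [Algebra K E']

theorem IntermediateField.map_sup_adjoin_pow_eq_of_pow_eq (ι : E →ₐ[K] E')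
    (L : IntermediateField K E) {ℓ : ℕ} {b ρ : E} (hρ : ρ ^ ℓ = b) (hρ0 : ρ ≠ 0)
    (hμ : ∀ u : E', u ^ ℓ = 1 → u ∈ Set.range (algebraMap K E')) :
    (L ⊔ adjoin K {x | x ^ ℓ = b}).map ι = L.map ι ⊔ adjoin K {y | y ^ ℓ = ι b} := by
  rw [map_sup, adjoin_map]
  refine le_antisymm (sup_le_sup_left (adjoin.mono _ _ _ ?_) _) ?_
  · rintro _ ⟨x, hx, rfl⟩
    exact (map_pow ι x ℓ).symm.trans (congrArg ι hx)
  · refine sup_le le_sup_left (adjoin_le_iff.mpr fun y hy => ?_)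
    have hιρ0 : ι ρ ≠ 0 := (map_ne_zero ι).mpr hρ0
    have hζ : (y / ι ρ) ^ ℓ = 1 := by
      rw [div_pow, hy.out, ← hρ, map_pow, div_self (pow_ne_zero _ hιρ0)]
    obtain ⟨k, hk⟩ := hμ _ hζ
    have hy : y = algebraMap K E' k * ι ρ := by rw [hk, div_mul_cancel₀ _ hιρ0]
    rw [hy]
    exact mul_mem (algebraMap_mem _ _)
      (le_sup_right (α := IntermediateField K E') (subset_adjoin _ _ ⟨ρ, hρ, rfl⟩))

theorem IntermediateField.exists_map_sup_adjoin_pow_eq (ι : E →ₐ[K] E')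
    (hμ : ∀ n, 0 < n → ∀ u : E', u ^ n = 1 → u ∈ Set.range (algebraMap K E'))
    (L : IntermediateField K E) {ℓ : ℕ} {b : E} (hℓ : 0 < ℓ) (hb : b ∈ L) (hb0 : b ≠ 0) :
    ∃ (ℓ' : ℕ) (b' : E'), 0 < ℓ' ∧ b' ∈ L.map ι ∧ b' ≠ 0 ∧
      (L ⊔ adjoin K {x | x ^ ℓ = b}).map ι = L.map ι ⊔ adjoin K {y | y ^ ℓ' = b'} := by
  by_cases hroot : ∃ ρ, ρ ^ ℓ = b
  · obtain ⟨ρ, hρ⟩ := hroot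
    have hρ0 : ρ ≠ 0 := by rintro rfl; exact hb0 (by rw [← hρ, zero_pow hℓ.ne'])
    exact ⟨ℓ, ι b, hℓ, ⟨b, hb, rfl⟩, (map_ne_zero ι).mpr hb0,
      L.map_sup_adjoin_pow_eq_of_pow_eq ι hρ hρ0 (hμ ℓ hℓ)⟩
  · push Not at hroot
    refine ⟨1, 1, one_pos, one_mem _, one_ne_zero, ?_⟩
    simp [hroot]

def RootTower.mapSnoc (T : RootTower K E) (ι : E →ₐ[K] E')
    (hμ : ∀ n, 0 < n → ∀ u : E', u ^ n = 1 → u ∈ Set.range (algebraMap K E'))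
    {ℓ : ℕ} {c : E'} (hℓ : 0 < ℓ) (hc : c ∈ ι.fieldRange) (hc0 : c ≠ 0)
    (htop : ι.fieldRange ⊔ adjoin K {y | y ^ ℓ = c} = ⊤) : RootTower K E' where
  r := T.r + 1
  step := Fin.snoc (α := fun _ => IntermediateField K E') (fun i => (T.step i).map ι) ⊤
  first := by
    rw [← Fin.castSucc_zero, Fin.snoc_castSucc, T.first, IntermediateField.map_bot]
  last := Fin.snoc_last ..
  radical := by
    refine Fin.lastCases ?_ fun i => ?_
    · refine ⟨ℓ, c, hℓ, ?_, hc0, ?_⟩ <;>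
        rw [Fin.snoc_castSucc, T.last, ← AlgHom.fieldRange_eq_map]
      · exact hc
      · rw [Fin.succ_last, Fin.snoc_last, htop]
    · obtain ⟨ℓ, b, hℓ, hb, hb0, hstep⟩ := T.radical i
      rw [Fin.succ_castSucc, Fin.snoc_castSucc, Fin.snoc_castSucc, hstep]
      exact (T.step i.castSucc).exists_map_sup_adjoin_pow_eq ι hμ hℓ hb hb0

end

theorem IntermediateField.fieldRange_sup_adjoin_eq_top {K E E' : Type*} [Field K] [Field E]
    [Field E'] [Algebra K E] [Algebra K E'] [Algebra E E'] [IsScalarTower K E E'] {S : Set E'}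
    (hS : Algebra.adjoin E S = ⊤) :
    (IsScalarTower.toAlgHom K E E').fieldRange ⊔ adjoin K S = ⊤ := by
  rw [eq_top_iff]
  rintro z -
  have hz : z ∈ Algebra.adjoin E S := hS ▸ trivial
  induction hz using Algebra.adjoin_induction with
  | mem x hx => exact le_sup_right (α := IntermediateField K E') (subset_adjoin K S hx)
  | algebraMap x => exact le_sup_left (α := IntermediateField K E') ⟨x, rfl⟩
  | add x y _ _ hx hy => exact add_mem hx hy
  | mul x y _ _ hx hy => exact mul_mem hx hy

theorem RootTower.exists_sq_eq (F : Type*) {K E : Type} [Field F] [IsAlgClosed F] [Field K]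
    [Algebra F K] [Field E] [Algebra K E] (T : RootTower K E) {a : E} (ha : a ≠ 0) :
    ∃ (E' : Type) (_ : Field E') (_ : Algebra K E') (_ : RootTower K E') (ι : E →ₐ[K] E')
      (s : E'), s ^ 2 = ι a := by
  set f : E[X] := X ^ 2 - C a
  have hf : f ≠ 0 := X_pow_sub_C_ne_zero two_pos a
  have hroots : f.rootSet f.SplittingField = {y | y ^ 2 = algebraMap E f.SplittingField a} := by
    ext y
    simp [mem_rootSet, hf, f, sub_eq_zero]
  have hμ : ∀ n, 0 < n → ∀ u : f.SplittingField, u ^ n = 1 →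
      u ∈ Set.range (algebraMap K f.SplittingField) := fun n hn u hu => by
    obtain ⟨c, rfl⟩ :=
      ((algebraMap K f.SplittingField).comp (algebraMap F K)).mem_range_of_pow_eq_one hn hu
    exact ⟨_, rfl⟩
  have htop := fieldRange_sup_adjoin_eq_top (K := K) (SplittingField.adjoin_rootSet f)
  rw [hroots] at htop
  obtain ⟨s, hs⟩ := (SplittingField.splits f).exists_eval_eq_zero (by
    rw [degree_map]; simp [f, degree_X_pow_sub_C two_pos])
  refine ⟨_, inferInstance, inferInstance, T.mapSnoc _ hμ two_pos ⟨a, rfl⟩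
    ((_root_.map_ne_zero _).mpr ha) htop, IsScalarTower.toAlgHom K E f.SplittingField, s, ?_⟩
  simpa [f, sub_eq_zero] using hs

theorem offset_square_parametrization_general
    {F : Type} [Field F] [IsAlgClosed F]
    {E : Type} [Field E] [Algebra F E] [Algebra (RatFunc F) E]
    (T : RootTower (RatFunc F) E)
    (D : Derivation F E E)
    (R₁ R₂ : E) (d : F)
    (ha : D R₁ ^ 2 + D R₂ ^ 2 ≠ 0) :
    ∃ (E' : Type) (_ : Field E') (_ : Algebra (RatFunc F) E')
      (_ : RootTower (RatFunc F) E') (ι : E →ₐ[RatFunc F] E') (s : E'),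
      s ≠ 0 ∧ s ^ 2 = ι (D R₁ ^ 2 + D R₂ ^ 2) ∧
      ∃ O₁p O₂p O₁m O₂m : E',
        O₁p = ι R₁ - algebraMap (RatFunc F) E' (algebraMap F (RatFunc F) d) * ι (D R₂) / s ∧
        O₂p = ι R₂ + algebraMap (RatFunc F) E' (algebraMap F (RatFunc F) d) * ι (D R₁) / s ∧
        O₁m = ι R₁ + algebraMap (RatFunc F) E' (algebraMap F (RatFunc F) d) * ι (D R₂) / s ∧
        O₂m = ι R₂ - algebraMap (RatFunc F) E' (algebraMap F (RatFunc F) d) * ι (D R₁) / s := by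
  obtain ⟨E', _, _, T', ι, s, hs⟩ := T.exists_sq_eq F ha
  have hs0 : s ≠ 0 := ne_zero_pow two_ne_zero (hs ▸ (map_ne_zero ι).mpr ha)
  exact ⟨E', _, _, T', ι, s, hs0, hs, _, _, _, _, rfl, rfl, rfl, rfl⟩

/-- Offsets preserve radical parametrizability (key computational step): if `(R₁, R₂)` is
a square parametrization with entries in the top field `E` of a root tower over
`K = F(t)`, `D` is the extension of `d/dt` to `E`, `a = R₁'² + R₂'² ≠ 0` and `d ≠ 0`,
then there is a root tower over `K` with top field `E'` containing `E` (via an embedding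
`ι`) together with a square root `s` of `ι a`, and the offset components
`O^± = (ι R₁ ∓ d·ι R₂'/s, ι R₂ ± d·ι R₁'/s)` lie in `E'²`. -/
theorem offset_square_parametrization
    {F : Type} [Field F] [IsAlgClosed F] [CharZero F]
    {E : Type} [Field E] [Algebra F E] [Algebra (RatFunc F) E]
    [IsScalarTower F (RatFunc F) E]
    (T : RootTower (RatFunc F) E)
    (D : Derivation F E E)
    (hD : ∀ p : Polynomial F,
      D (algebraMap (RatFunc F) E (algebraMap (Polynomial F) (RatFunc F) p)) =
        algebraMap (RatFunc F) E
          (algebraMap (Polynomial F) (RatFunc F) (Polynomial.derivative p)))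
    (R₁ R₂ : E) (d : F) (hd : d ≠ 0)
    (ha : D R₁ ^ 2 + D R₂ ^ 2 ≠ 0) :
    ∃ (E' : Type) (_ : Field E') (_ : Algebra (RatFunc F) E')
      (_ : RootTower (RatFunc F) E') (ι : E →ₐ[RatFunc F] E') (s : E'),
      s ≠ 0 ∧ s ^ 2 = ι (D R₁ ^ 2 + D R₂ ^ 2) ∧
      ∃ O₁p O₂p O₁m O₂m : E',
        O₁p = ι R₁ - algebraMap (RatFunc F) E' (algebraMap F (RatFunc F) d) * ι (D R₂) / s ∧
        O₂p = ι R₂ + algebraMap (RatFunc F) E' (algebraMap F (RatFunc F) d) * ι (D R₁) / s ∧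
        O₁m = ι R₁ + algebraMap (RatFunc F) E' (algebraMap F (RatFunc F) d) * ι (D R₂) / s ∧
        O₂m = ι R₂ - algebraMap (RatFunc F) E' (algebraMap F (RatFunc F) d) * ι (D R₁) / s :=
  offset_square_parametrization_general T D R₁ R₂ d ha
end
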